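/- arXiv:2309.05633 — 3 statements merged into one kernel-verified Lean document; each statement's English description precedes it below -/
import Mathlib

section
/- Let a > 0 and f > 0 be real numbers and define g : (0, ∞) → ℝ by g(M) = a/M + f·(log₂ M + 2). Then evaluating g at the ceiling of the real minimizer gives the strict bound g(⌈(ln 2)·a/f⌉) < f·(log₂((a + f)/f) + 2.914). -/
lemma exp_lt : Real.exp (0.3665 : ℝ) < 1.442695 := by
  have h := Real.exp_bound' (x := (0.3665:ℝ)) (by norm_num) (by norm_num) (n := 6) (by norm_num)
  calc Real.exp (0.3665:ℝ) ≤ _ := h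
    _ < 1.442695 := by
      simp [Finset.sum_range_succ, Nat.factorial]
      norm_num

lemma loglog_lt : Real.log (Real.log 2) < -0.3665 := by
  have h1 : Real.log 2 < 0.6931471808 := Real.log_two_lt_d9
  have hpos : (0:ℝ) < Real.log 2 := Real.log_pos one_lt_two
  have h3 : Real.log (Real.log 2) < Real.log 0.6931471808 :=
    Real.log_lt_log hpos h1
  refine h3.trans_le ?_
  rw [Real.log_le_iff_le_exp (by norm_num)]
  have h4 : Real.exp (-0.3665 : ℝ) = 1 / Real.exp (0.3665:ℝ) := by
    rw [Real.exp_neg]; ring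
  rw [h4, le_div_iff₀ (Real.exp_pos _)]
  nlinarith [exp_lt, Real.exp_pos (0.3665:ℝ)]

lemma key_num : 1 + Real.log (Real.log 2) < 0.914 * Real.log 2 := by
  have h2 : (0.6931471803 : ℝ) < Real.log 2 := Real.log_two_gt_d9
  nlinarith [loglog_lt]

set_option maxHeartbeats 1000000

/-- For reals `a > 0`, `f > 0` and
`g(M) = a/M + f·(log₂ M + 2)`, evaluating `g` at the ceiling of the real
minimizer `(ln 2)·a/f` gives the strict bound
`g(⌈(ln 2)·a/f⌉) < f·(log₂((a+f)/f) + 2.914)`. -/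
theorem golomb_cost_ceil_bound (a f : ℝ) (ha : 0 < a) (hf : 0 < f)
    (g : ℝ → ℝ) (hg : ∀ M, g M = a / M + f * (Real.logb 2 M + 2)) :
    g ((⌈Real.log 2 * a / f⌉ : ℤ) : ℝ)
      < f * (Real.logb 2 ((a + f) / f) + 2.914) := by
  have hL : 0 < Real.log 2 := Real.log_pos one_lt_two
  have hL2 : (0.6931471803 : ℝ) < Real.log 2 := Real.log_two_gt_d9
  have hL1 : Real.log 2 < 1 := by
    have := Real.log_two_lt_d9; linarith
  set L := Real.log 2 with hLdef
  set x : ℝ := L * a / f with hxdef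
  have hx : 0 < x := by positivity
  set m : ℝ := ((⌈x⌉ : ℤ) : ℝ) with hmdef
  have hxm : x ≤ m := Int.le_ceil x
  have hm1 : m ≤ x + 1 := le_of_lt (Int.ceil_lt_add_one x)
  have hm0 : 0 < m := lt_of_lt_of_le hx hxm
  have hx1 : (0:ℝ) < x + 1 := by linarith
  rw [hg]
  have hfm : L * a ≤ f * m := by
    rw [hxdef, div_le_iff₀ hf] at hxm; linarith [hxm]
  -- Step A : value at m ≤ value at x+1
  have hlogA : 1 - m / (x+1) ≤ Real.log (x+1) - Real.log m := by
    have h := Real.log_le_sub_one_of_pos (show 0 < m / (x+1) by positivity)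
    rw [Real.log_div (ne_of_gt hm0) (ne_of_gt hx1)] at h
    linarith
  have stepA : a / m + f * Real.logb 2 m ≤ a / (x+1) + f * Real.logb 2 (x+1) := by
    have key : a / m - a / (x+1) ≤ (f / L) * (Real.log (x+1) - Real.log m) := by
      have e1 : a / m - a / (x+1) = a * (x + 1 - m) / (m * (x+1)) := by
        field_simp
      have e2 : (f / L) * (1 - m/(x+1)) = f * (x + 1 - m) / (L * (x+1)) := by
        field_simp
      have h3 : a * (x + 1 - m) / (m * (x+1)) ≤ f * (x + 1 - m) / (L * (x+1)) := by
        rw [div_le_div_iff₀ (by positivity) (by positivity)]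
        have hd : 0 ≤ x + 1 - m := by linarith
        nlinarith [mul_le_mul_of_nonneg_right hfm hd, mul_pos hx hx1]
      have h4 : (f / L) * (1 - m/(x+1)) ≤ (f / L) * (Real.log (x+1) - Real.log m) :=
        mul_le_mul_of_nonneg_left hlogA (by positivity)
      rw [e1]; exact h3.trans (e2 ▸ h4)
    rw [mul_sub] at key
    have e3 : f * Real.logb 2 m = (f/L) * Real.log m := by
      rw [Real.logb, ← hLdef]; field_simp
    have e4 : f * Real.logb 2 (x+1) = (f/L) * Real.log (x+1) := by
      rw [Real.logb, ← hLdef]; field_simp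
    rw [e3, e4]; linarith
  have hx1eq : x + 1 = (L * a + f) / f := by
    rw [hxdef]; field_simp
  have hLaf : (0:ℝ) < L * a + f := by positivity
  have haf : (0:ℝ) < a + f := by linarith
  have hlog1 : Real.log (x+1) = Real.log (L*a+f) - Real.log f := by
    rw [hx1eq, Real.log_div (ne_of_gt hLaf) (ne_of_gt hf)]
  have hlog2 : Real.log (L*a+f) ≤ Real.log L + Real.log (a+f) + f*(1-L)/(L*(a+f)) := by
    have e : L*a+f = L * (a+f) * ((L*a+f)/(L*(a+f))) := by field_simp
    have hr : (0:ℝ) < (L*a+f)/(L*(a+f)) := by positivity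
    calc Real.log (L*a+f) = Real.log (L*(a+f)) + Real.log ((L*a+f)/(L*(a+f))) := by
          rw [← Real.log_mul (by positivity) (ne_of_gt hr), ← e]
      _ ≤ Real.log L + Real.log (a+f) + f*(1-L)/(L*(a+f)) := by
          rw [Real.log_mul (ne_of_gt hL) (ne_of_gt haf)]
          have h := Real.log_le_sub_one_of_pos hr
          have e2 : (L*a+f)/(L*(a+f)) - 1 = f*(1-L)/(L*(a+f)) := by
            field_simp; ring
          rw [e2] at h
          linarith
  have ha1 : a/(x+1) = f/L - f^2/(L*(L*a+f)) := by
    rw [hx1eq]; field_simp; ring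
  -- (i)
  have hi : f^2*(1-L)/(L^2*(a+f)) ≤ f^2/(L*(L*a+f)) := by
    have h2L : (1:ℝ) < 2*L := by linarith
    have h' : (1-L)*(L*a+f) ≤ L*(a+f) := by
      nlinarith [mul_pos (mul_pos hL hL) ha, mul_pos hf hL]
    rw [div_le_div_iff₀ (by positivity) (by positivity)]
    nlinarith [mul_le_mul_of_nonneg_left h' (le_of_lt (mul_pos (mul_pos hf hf) hL))]
  have hnum : 1 + Real.log L < 0.914 * L := key_num
  have hlogb : Real.logb 2 ((a+f)/f) = (Real.log (a+f) - Real.log f)/L := by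
    rw [Real.logb, Real.log_div (ne_of_gt haf) (ne_of_gt hf), hLdef]
  have stepB : a/(x+1) + f * Real.logb 2 (x+1)
      ≤ f * ((Real.log (a+f) - Real.log f)/L) + f * Real.log L / L + f/L
        + (f^2*(1-L)/(L^2*(a+f)) - f^2/(L*(L*a+f))) := by
    have e4 : f * Real.logb 2 (x+1) = (f/L) * (Real.log (L*a+f) - Real.log f) := by
      rw [Real.logb, ← hLdef, hlog1]; ring
    rw [e4, ha1]
    have h5 : (f/L) * (Real.log (L*a+f) - Real.log f)
        ≤ (f/L) * (Real.log L + Real.log (a+f) + f*(1-L)/(L*(a+f)) - Real.log f) := by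
      apply mul_le_mul_of_nonneg_left _ (by positivity)
      linarith
    have e5 : (f/L) * (Real.log L + Real.log (a+f) + f*(1-L)/(L*(a+f)) - Real.log f)
        = f * ((Real.log (a+f) - Real.log f)/L) + f * Real.log L / L
          + f^2*(1-L)/(L^2*(a+f)) := by
      field_simp; ring
    rw [e5] at h5
    linarith
  have hfinal : f * Real.log L / L + f/L < 0.914 * f := by
    rw [← add_div, div_lt_iff₀ hL]
    nlinarith [hnum]
  rw [hlogb]
  have egoal1 : a / m + f * (Real.logb 2 m + 2) = (a/m + f * Real.logb 2 m) + 2*f := by ring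
  have egoal2 : f * ((Real.log (a+f) - Real.log f)/L + 2.914)
      = f * ((Real.log (a+f) - Real.log f)/L) + 2.914*f := by ring
  rw [egoal1, egoal2]
  linarith [stepA, stepB, hi, hfinal]
end

section
/- (Theorem 1, per-level asymptotic bound.) Fix L ≥ 2, strictly positive reals f_0, ..., f_{L−1} with ∑_{ℓ=0}^{L−1} f_ℓ = 1, and an index 1 ≤ ℓ ≤ L−1. For each N ≥ 1 let x^{(N)} ∈ {0,...,L−1}^N, and suppose that for every 0 ≤ m ≤ L−1 the empirical frequencies converge: t_m(x^{(N)})/N → f_m as N → ∞. Let M_ℓ = ⌈(ln 2)·(1 − ∑_{m=1}^{ℓ} f_m)/f_ℓ⌉ (a positive integer, since 1 − ∑_{m=1}^{ℓ} f_m ≥ f_0 > 0), and let B_ℓ(N) = ∑_{i=1}^{t_ℓ(x^{(N)})} (⌊r_i^{(N)}/M_ℓ⌋ + 1 + ⌊log₂ M_ℓ⌋ + 1) denote the total number of bits used to Golomb-encode with parameter M_ℓ the run lengths r_1^{(N)}, ..., r_{t_ℓ}^{(N)} of the restricted support vector s_ℓ[I_ℓ] of x^{(N)}. Then limsup_{N→∞}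 B_ℓ(N)/N < f_ℓ·(log₂((1 − ∑_{m=1}^{ℓ−1} f_m)/f_ℓ) + 2.914). -/
/-- The run lengths of zeros of a binary string: for each `true` (a "one"), in
order, the number of consecutive `false`s ("zeros") immediately preceding it.
The trailing run of zeros after the last one is not recorded. -/
def runLengths : List Bool → List ℕ
  | [] => []
  | b :: rest =>
    if b then 0 :: runLengths rest
    else
      match runLengths rest with
      | [] => []
      | r :: rs => (r + 1) :: rs

/-- The type (frequency) of symbol `m` in `x ∈ {0,…,L−1}^N`:
`t_m(x) = #{n : x_n = m}`. -/
def typeCount (N : ℕ) (x : Fin N → ℕ) (m : ℕ) : ℕ :=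
  ((List.finRange N).filter (fun n => decide (x n = m))).length

/-- The index sets, as sorted lists: `I₁ = (1,…,N)` and
`I_{ℓ+1} = I_ℓ \ {n : x_n = ℓ}` for `ℓ ≥ 1`. -/
def idxList (N : ℕ) (x : Fin N → ℕ) : ℕ → List (Fin N)
  | 0 => List.finRange N
  | ℓ + 1 =>
    if ℓ = 0 then List.finRange N
    else (idxList N x ℓ).filter (fun n => decide (x n ≠ ℓ))

/-- The restricted support vector `s_ℓ[I_ℓ]`: the binary string whose `i`-th
entry is `true` iff the `i`-th smallest index `n` in `I_ℓ` satisfies `x_n = ℓ`. -/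
def supportList (N : ℕ) (x : Fin N → ℕ) (ℓ : ℕ) : List Bool :=
  (idxList N x ℓ).map (fun n => decide (x n = ℓ))

/-- Total number of bits used to Golomb-encode a list of run lengths with
parameter `M`: each `r` costs `⌊r/M⌋ + 1` bits (unary quotient) plus
`⌊log₂ M⌋ + 1` bits (remainder). -/
def golombBits (M : ℕ) (rls : List ℕ) : ℕ :=
  (rls.map (fun r => r / M + 1 + Nat.log 2 M + 1)).sum

lemma runLengths_cons_true (rest : List Bool) :
    runLengths (true :: rest) = 0 :: runLengths rest := by
  simp [runLengths]

lemma runLengths_cons_false (rest : List Bool) :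
    runLengths (false :: rest) =
      match runLengths rest with
      | [] => []
      | r :: rs => (r + 1) :: rs := by
  simp [runLengths]

lemma runLengths_length (s : List Bool) : (runLengths s).length = s.count true := by
  induction s with
  | nil => simp [runLengths]
  | cons b rest ih =>
    cases b with
    | true => simp [runLengths_cons_true, ih, List.count_cons]
    | false =>
      rw [runLengths_cons_false]
      rcases h : runLengths rest with _ | ⟨r, rs⟩
      · rw [h] at ih
        simp [List.count_cons, ← ih]
      · rw [h] at ih
        simp only [List.count_cons]
        simpa using ih

lemma runLengths_sum_add_length_le (s : List Bool) :
    (runLengths s).sum + (runLengths s).length ≤ s.length := by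
  induction s with
  | nil => simp [runLengths]
  | cons b rest ih =>
    cases b with
    | true =>
      rw [runLengths_cons_true]
      simp only [List.sum_cons, List.length_cons]
      omega
    | false =>
      rw [runLengths_cons_false]
      rcases h : runLengths rest with _ | ⟨r, rs⟩
      · simp
      · rw [h] at ih
        simp only [List.sum_cons, List.length_cons] at ih ⊢
        omega

lemma golombBits_le (M : ℕ) (rls : List ℕ) :
    golombBits M rls ≤ rls.sum / M + rls.length * (Nat.log 2 M + 2) := by
  induction rls with
  | nil => simp [golombBits]
  | cons r rs ih =>
    simp only [golombBits, List.map_cons, List.sum_cons, List.length_cons] at ih ⊢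
    have h1 : r / M + rs.sum / M ≤ (r + rs.sum) / M := Nat.add_div_le_add_div r rs.sum M
    have := Nat.add_le_add_left ih (r / M + 1 + Nat.log 2 M + 1)
    calc r / M + 1 + Nat.log 2 M + 1 + (List.map (fun r => r / M + 1 + Nat.log 2 M + 1) rs).sum
        ≤ r / M + 1 + Nat.log 2 M + 1 + (rs.sum / M + rs.length * (Nat.log 2 M + 2)) := this
      _ ≤ (r + rs.sum) / M + (rs.length + 1) * (Nat.log 2 M + 2) := by
          have : (rs.length + 1) * (Nat.log 2 M + 2) = rs.length * (Nat.log 2 M + 2) + (Nat.log 2 M + 2) := by ring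
          omega

lemma filter_filter_length {α : Type*} (l : List α) (p : α → Bool) :
    (l.filter p).length + (l.filter (fun a => ! p a)).length = l.length := by
  induction l with
  | nil => simp
  | cons a l ih =>
    cases h : p a <;> simp [List.filter_cons, h] <;> omega

lemma idxList_eq (N : ℕ) (x : Fin N → ℕ) (ℓ : ℕ) (hℓ : 1 ≤ ℓ) :
    idxList N x ℓ = (List.finRange N).filter (fun n => decide (x n = 0 ∨ ℓ ≤ x n)) := by
  induction ℓ with
  | zero => omega
  | succ k ih =>
    rcases Nat.eq_or_lt_of_le hℓ with h1 | h1
    · obtain rfl : k = 0 := by omega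
      simp only [idxList, if_pos trivial]
      rw [eq_comm, List.filter_eq_self]
      intro a _
      simp
      omega
    · have hk : 1 ≤ k := by omega
      have hk0 : k ≠ 0 := by omega
      simp only [idxList, if_neg hk0]
      rw [ih hk, List.filter_filter]
      apply List.filter_congr
      intro a _
      rw [← Bool.decide_and, decide_eq_decide]
      omega

lemma filter_idx_length (N : ℕ) (x : Fin N → ℕ) (ℓ : ℕ) (hℓ : 1 ≤ ℓ) :
    ((idxList N x ℓ).filter (fun n => decide (x n = ℓ))).length = typeCount N x ℓ := by
  rw [idxList_eq N x ℓ hℓ, List.filter_filter, typeCount]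
  congr 1
  apply List.filter_congr
  intro a _
  rw [← Bool.decide_and, decide_eq_decide]
  omega

lemma count_support (N : ℕ) (x : Fin N → ℕ) (ℓ : ℕ) (hℓ : 1 ≤ ℓ) :
    (supportList N x ℓ).count true = typeCount N x ℓ := by
  rw [supportList, ← filter_idx_length N x ℓ hℓ]
  rw [List.count, List.countP_map, ← List.countP_eq_length_filter]
  congr 1
  funext n
  simp

lemma length_idx (N : ℕ) (x : Fin N → ℕ) (ℓ : ℕ) (hℓ : 1 ≤ ℓ) :
    (idxList N x ℓ).length + ∑ m ∈ Finset.Ico 1 ℓ, typeCount N x m = N := by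
  induction ℓ with
  | zero => omega
  | succ k ih =>
    rcases Nat.eq_or_lt_of_le hℓ with h1 | h1
    · obtain rfl : k = 0 := by omega
      simp [idxList]
    · have hk : 1 ≤ k := by omega
      have hk0 : k ≠ 0 := by omega
      have hidx : idxList N x (k+1) = (idxList N x k).filter (fun n => decide (x n ≠ k)) := by
        simp only [idxList, if_neg hk0]
      have hsplit : ((idxList N x k).filter (fun n => decide (x n = k))).length
          + ((idxList N x k).filter (fun n => decide (x n ≠ k))).length
          = (idxList N x k).length := by
        have := filter_filter_length (idxList N x k) (fun n => decide (x n = k))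
        have heq : (fun n : Fin N => decide (x n ≠ k)) = fun a => !decide (x a = k) := by
          funext a; simp
        rw [heq, ← this]
      have hfk := filter_idx_length N x k hk
      have hIH := ih hk
      rw [Finset.sum_Ico_succ_top hk, hidx]
      omega

lemma length_support (N : ℕ) (x : Fin N → ℕ) (ℓ : ℕ) (hℓ : 1 ≤ ℓ) :
    (supportList N x ℓ).length + ∑ m ∈ Finset.Ico 1 ℓ, typeCount N x m = N := by
  rw [supportList, List.length_map]
  exact length_idx N x ℓ hℓ

open Real

lemma key_numeric : Real.log (Real.log 2) + 1 < 0.914 * Real.log 2 := by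
  have hl := Real.log_two_gt_d9
  have hu := Real.log_two_lt_d9
  have hl2 : (0:ℝ) < Real.log 2 := by norm_num at hl ⊢; linarith
  have he := Real.exp_one_lt_d9
  have he0 := Real.exp_pos 1
  -- lower bound on exp (0.914 * log 2)
  have hsum : ∑ i ∈ Finset.range 7, (0.6335365:ℝ)^i / i.factorial ≤ Real.exp 0.6335365 :=
    Real.sum_le_exp_of_nonneg (by norm_num) 7
  have hsumval : (1.88424:ℝ) ≤ ∑ i ∈ Finset.range 7, (0.6335365:ℝ)^i / i.factorial := by
    simp only [Finset.sum_range_succ, Finset.sum_range_zero]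
    norm_num [Nat.factorial]
  have hmono : Real.exp 0.6335365 ≤ Real.exp (0.914 * Real.log 2) := by
    apply Real.exp_le_exp.mpr
    nlinarith
  have hprod : Real.log 2 * Real.exp 1 < Real.exp (0.914 * Real.log 2) := by
    nlinarith
  have hpos : (0:ℝ) < Real.log 2 * Real.exp 1 := by positivity
  have := Real.log_lt_log hpos hprod
  rw [Real.log_mul hl2.ne' he0.ne', Real.log_exp, Real.log_exp] at this
  linarith

lemma key_ineq (c : ℝ) (hc : 0 < c) (M : ℕ) (hM : 1 ≤ M)
    (h1 : Real.log 2 * c ≤ M) (h2 : (M : ℝ) ≤ Real.log 2 * c + 1) :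
    c / M + (Nat.log 2 M : ℝ) + 2 < Real.logb 2 (c + 1) + 2.914 := by
  have hl2 : (0:ℝ) < Real.log 2 := Real.log_pos (by norm_num)
  have hla := Real.log_two_gt_d9
  have hlb := Real.log_two_lt_d9
  have hM0 : (0:ℝ) < M := by exact_mod_cast hM
  set l2 := Real.log 2 with hl2def
  obtain ⟨t, htdef⟩ : ∃ t : ℝ, t = (M:ℝ) / l2 := ⟨_, rfl⟩
  obtain ⟨d, hddef⟩ : ∃ d : ℝ, d = t - c := ⟨_, rfl⟩
  have ht0 : 0 < t := by rw [htdef]; positivity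
  have hMt : (M:ℝ) = l2 * t := by rw [htdef]; field_simp
  have hd0 : 0 ≤ d := by
    rw [hddef, sub_nonneg, htdef, le_div_iff₀ hl2]
    linarith [h1]
  have hdl : d * l2 ≤ 1 := by rw [hddef]; nlinarith [hMt, h2]
  have hM1 : (1:ℝ) ≤ M := by exact_mod_cast hM
  have htl : 1 ≤ t * l2 := by nlinarith [hMt, hM1]
  have hdsq : d ^ 2 ≤ t + d := by
    nlinarith [mul_nonneg hd0 hd0, mul_nonneg hd0 hl2.le,
      mul_nonneg (mul_nonneg hd0 hd0) hl2.le, mul_nonneg hd0 (le_trans zero_le_one htl)]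
  have hcd : c = t - d := by rw [hddef]; ring
  have htd : 0 < t + d := by linarith
  -- exp(-(d/t)) ≤ t/(t+d)
  have hexp : Real.exp (-(d / t)) ≤ t / (t + d) := by
    have h1' : 1 + d / t ≤ Real.exp (d / t) := by
      have := Real.add_one_le_exp (d / t); linarith
    have hpos : 0 < 1 + d / t := by positivity
    rw [Real.exp_neg]
    have hinv : (Real.exp (d / t))⁻¹ ≤ (1 + d / t)⁻¹ := inv_anti₀ hpos h1'
    have heq : (1 + d / t)⁻¹ = t / (t + d) := by
      rw [one_add_div ht0.ne', inv_div, add_comm]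
    linarith [heq ▸ hinv]
  -- main multiplicative inequality
  have hct : c * l2 / M = c / t := by
    rw [hMt, htdef]
    field_simp
  have hsplit : Real.exp (c / t) = Real.exp 1 * Real.exp (-(d / t)) := by
    rw [← Real.exp_add]
    congr 1
    rw [hcd, sub_div, div_self ht0.ne']
    ring
  have he0 := Real.exp_pos 1
  have hMain : (M:ℝ) * Real.exp (c * l2 / M) ≤ (c + 1) * l2 * Real.exp 1 := by
    rw [hct, hsplit, hMt]
    have hstep : Real.exp 1 * Real.exp (-(d / t)) ≤ Real.exp 1 * (t / (t + d)) :=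
      mul_le_mul_of_nonneg_left hexp he0.le
    have ht2 : t * (t / (t + d)) ≤ c + 1 := by
      rw [mul_div_assoc'] at *
      rw [div_le_iff₀ htd]
      nlinarith [hdsq, hcd]
    calc l2 * t * (Real.exp 1 * Real.exp (-(d / t)))
        ≤ l2 * t * (Real.exp 1 * (t / (t + d))) := by
          apply mul_le_mul_of_nonneg_left hstep (by positivity)
      _ = (t * (t / (t + d))) * l2 * Real.exp 1 := by ring
      _ ≤ (c + 1) * l2 * Real.exp 1 := by
          nlinarith [mul_nonneg (sub_nonneg.mpr ht2) (mul_pos hl2 he0).le]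
  -- take logs
  have hc1 : (0:ℝ) < c + 1 := by linarith
  have hlog : Real.log M + c * l2 / M ≤ Real.log (c + 1) + Real.log l2 + 1 := by
    have hLpos : (0:ℝ) < (M:ℝ) * Real.exp (c * l2 / M) := by positivity
    have := Real.log_le_log hLpos hMain
    rw [Real.log_mul hM0.ne' (Real.exp_pos _).ne', Real.log_exp,
      Real.log_mul (by positivity : ((c+1)*l2 : ℝ) ≠ 0) (Real.exp_pos _).ne',
      Real.log_mul hc1.ne' hl2.ne', Real.log_exp] at this
    linarith
  have hnum := key_numeric
  rw [← hl2def] at hnum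
  -- multiply target by l2
  have hmulform : (c / M + Real.logb 2 M + 2) * l2 < (Real.logb 2 (c + 1) + 2.914) * l2 := by
    rw [Real.logb, Real.logb, ← hl2def]
    have e1 : (c / M + Real.log M / l2 + 2) * l2 = (c / M) * l2 + Real.log M + 2 * l2 := by
      field_simp
      try ring
    have e2 : (Real.log (c + 1) / l2 + 2.914) * l2 = Real.log (c + 1) + 2.914 * l2 := by
      field_simp
      try ring
    rw [e1, e2]
    have e3 : c * l2 / M = (c / M) * l2 := by ring
    rw [e3] at hlog
    linarith
  have hfin : c / M + Real.logb 2 M + 2 < Real.logb 2 (c + 1) + 2.914 :=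
    (mul_lt_mul_iff_of_pos_right hl2).mp hmulform
  have hnat : (Nat.log 2 M : ℝ) ≤ Real.logb 2 M := Real.natLog_le_logb M 2
  linarith

/-- **Theorem 1, per-level asymptotic bound.**  Fix `L ≥ 2`, a
strictly positive PMF `f` on `{0,…,L−1}`, and `1 ≤ ℓ ≤ L−1`.  If the empirical
frequencies of the inputs `x⁽ᴺ⁾ ∈ {0,…,L−1}^N` converge to `f`, then with the
Golomb parameter `M_ℓ = ⌈(ln 2)(1 − ∑_{m=1}^ℓ f_m)/f_ℓ⌉`, the per-symbol bit
count for encoding the run lengths of `s_ℓ[I_ℓ]` satisfies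
`limsup_N B_ℓ(N)/N < f_ℓ·(log₂((1 − ∑_{m=1}^{ℓ−1} f_m)/f_ℓ) + 2.914)`. -/
theorem per_level_asymptotic_bound (L : ℕ) (hL : 2 ≤ L)
    (f : ℕ → ℝ) (hf : ∀ m < L, 0 < f m)
    (hsum : ∑ m ∈ Finset.range L, f m = 1)
    (ℓ : ℕ) (hℓ1 : 1 ≤ ℓ) (hℓL : ℓ ≤ L - 1)
    (x : (N : ℕ) → Fin N → ℕ) (hx : ∀ N n, x N n < L)
    (htype : ∀ m < L,
      Filter.Tendsto (fun N => (typeCount N (x N) m : ℝ) / N)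
        Filter.atTop (nhds (f m))) :
    Filter.limsup
        (fun N =>
          (golombBits
              (⌈Real.log 2 * (1 - ∑ m ∈ Finset.Icc 1 ℓ, f m) / f ℓ⌉.toNat)
              (runLengths (supportList N (x N) ℓ)) : ℝ) / N)
        Filter.atTop
      < f ℓ * (Real.logb 2 ((1 - ∑ m ∈ Finset.Ico 1 ℓ, f m) / f ℓ) + 2.914) := by
  have hℓL' : ℓ < L := by omega
  have hfl : 0 < f ℓ := hf ℓ hℓL'
  set S : ℝ := ∑ m ∈ Finset.Icc 1 ℓ, f m with hSdef
  have hg : 0 < 1 - S := by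
    have hsub : insert 0 (Finset.Icc 1 ℓ) ⊆ Finset.range L := by
      intro m hm
      simp only [Finset.mem_insert, Finset.mem_Icc] at hm
      simp only [Finset.mem_range]
      omega
    have hnn : ∀ m ∈ Finset.range L, m ∉ insert 0 (Finset.Icc 1 ℓ) → 0 ≤ f m :=
      fun m hm _ => (hf m (Finset.mem_range.mp hm)).le
    have hle := Finset.sum_le_sum_of_subset_of_nonneg hsub hnn
    rw [Finset.sum_insert (by simp), hsum] at hle
    have h0 : 0 < f 0 := hf 0 (by omega)
    rw [hSdef]
    linarith
  have hc : 0 < (1 - S) / f ℓ := div_pos hg hfl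
  set c : ℝ := (1 - S) / f ℓ with hcdef
  set y : ℝ := Real.log 2 * (1 - S) / f ℓ with hydef
  have hl2 : (0:ℝ) < Real.log 2 := Real.log_pos (by norm_num)
  have hyc : y = Real.log 2 * c := by rw [hydef, hcdef, mul_div_assoc]
  have hy : 0 < y := by rw [hyc]; positivity
  set M : ℕ := (⌈y⌉).toNat with hMdef
  have hceil : (1:ℤ) ≤ ⌈y⌉ := Int.ceil_pos.mpr hy
  have hM1 : 1 ≤ M := by rw [hMdef]; omega
  have hMr : (M:ℝ) = (⌈y⌉ : ℤ) := by
    rw [hMdef]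
    norm_cast
    omega
  have hMlow : Real.log 2 * c ≤ M := by
    rw [hMr, ← hyc]; exact Int.le_ceil y
  have hMup : (M:ℝ) ≤ Real.log 2 * c + 1 := by
    rw [hMr, ← hyc]
    have := Int.ceil_lt_add_one y
    linarith
  have hkey := key_ineq c hc M hM1 hMlow hMup
  -- identify the logb argument
  have hIcc : S = ∑ m ∈ Finset.Ico 1 ℓ, f m + f ℓ := by
    rw [hSdef, ← Finset.Ico_add_one_right_eq_Icc, Finset.sum_Ico_succ_top hℓ1]
  have hGe : (1 - ∑ m ∈ Finset.Ico 1 ℓ, f m) / f ℓ = c + 1 := by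
    rw [hcdef]
    field_simp
    linarith [hIcc]
  set C : ℝ := (Nat.log 2 M : ℝ) + 2 with hCdef
  set A : ℝ := (1 - S) / M + f ℓ * C with hAdef
  set T : ℝ := f ℓ * (Real.logb 2 ((1 - ∑ m ∈ Finset.Ico 1 ℓ, f m) / f ℓ) + 2.914) with hTdef
  have hMpos : (0:ℝ) < M := by exact_mod_cast hM1
  have hAT : A < T := by
    rw [hAdef, hTdef, hGe]
    have hA2 : (1 - S) / M = f ℓ * (c / M) := by
      rw [hcdef]; field_simp
    rw [hA2, hCdef]
    have := mul_lt_mul_of_pos_left hkey hfl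
    nlinarith [this]
  -- the comparison sequence
  set u : ℕ → ℝ := fun N =>
    (1 - (∑ m ∈ Finset.Icc 1 ℓ, (typeCount N (x N) m : ℝ)) / N) / M
      + ((typeCount N (x N) ℓ : ℝ) / N) * C with hudef
  have hSt : Filter.Tendsto
      (fun N => (∑ m ∈ Finset.Icc 1 ℓ, (typeCount N (x N) m : ℝ)) / N)
      Filter.atTop (nhds S) := by
    have heq : (fun N => (∑ m ∈ Finset.Icc 1 ℓ, (typeCount N (x N) m : ℝ)) / N)
        = fun N => ∑ m ∈ Finset.Icc 1 ℓ, ((typeCount N (x N) m : ℝ) / N) := by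
      funext N
      rw [Finset.sum_div]
    rw [heq, hSdef]
    apply tendsto_finset_sum
    intro m hm
    apply htype
    simp only [Finset.mem_Icc] at hm
    omega
  have hu : Filter.Tendsto u Filter.atTop (nhds A) := by
    rw [hudef, hAdef]
    exact ((tendsto_const_nhds.sub hSt).div_const M).add
      ((htype ℓ hℓL').mul_const C)
  -- eventual bound
  have hbound : ∀ᶠ N in Filter.atTop,
      (golombBits M (runLengths (supportList N (x N) ℓ)) : ℝ) / N ≤ u N := by
    filter_upwards [Filter.eventually_ge_atTop 1] with N hN
    have hN0 : (0:ℝ) < N := by exact_mod_cast hN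
    set s := supportList N (x N) ℓ with hsdef
    have h1 := golombBits_le M (runLengths s)
    have h2 : (runLengths s).length = typeCount N (x N) ℓ := by
      rw [runLengths_length, hsdef, count_support N (x N) ℓ hℓ1]
    have h3 := runLengths_sum_add_length_le s
    have h4 := length_support N (x N) ℓ hℓ1
    have h5 : ∑ m ∈ Finset.Icc 1 ℓ, typeCount N (x N) m
        = ∑ m ∈ Finset.Ico 1 ℓ, typeCount N (x N) m + typeCount N (x N) ℓ := by
      rw [← Finset.Ico_add_one_right_eq_Icc, Finset.sum_Ico_succ_top hℓ1]
    rw [← hsdef] at h4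
    -- real-valued chain
    have hcast1 : (golombBits M (runLengths s) : ℝ)
        ≤ ((runLengths s).sum / M : ℕ) + (typeCount N (x N) ℓ : ℝ) * C := by
      rw [hCdef]
      have := h1
      rw [h2] at this
      exact_mod_cast this
    have hcast2 : (((runLengths s).sum / M : ℕ) : ℝ) ≤ ((runLengths s).sum : ℝ) / M :=
      Nat.cast_div_le
    have hsum_le : ((runLengths s).sum : ℝ)
        ≤ (N : ℝ) - ∑ m ∈ Finset.Icc 1 ℓ, (typeCount N (x N) m : ℝ) := by
      have hnat : (runLengths s).sum + ∑ m ∈ Finset.Icc 1 ℓ, typeCount N (x N) m ≤ N := by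
        omega
      have h' : ((runLengths s).sum : ℝ)
          + ∑ m ∈ Finset.Icc 1 ℓ, (typeCount N (x N) m : ℝ) ≤ (N : ℝ) := by
        exact_mod_cast hnat
      linarith
    have hBle : (golombBits M (runLengths s) : ℝ)
        ≤ ((N : ℝ) - ∑ m ∈ Finset.Icc 1 ℓ, (typeCount N (x N) m : ℝ)) / M
          + (typeCount N (x N) ℓ : ℝ) * C := by
      have hdm : ((runLengths s).sum : ℝ) / M
          ≤ ((N : ℝ) - ∑ m ∈ Finset.Icc 1 ℓ, (typeCount N (x N) m : ℝ)) / M := by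
        gcongr
      linarith [hcast1, hcast2, hdm]
    -- divide by N
    simp only [hudef]
    have huN : (1 - (∑ m ∈ Finset.Icc 1 ℓ, (typeCount N (x N) m : ℝ)) / N) / M
          + ((typeCount N (x N) ℓ : ℝ) / N) * C
        = (((N : ℝ) - ∑ m ∈ Finset.Icc 1 ℓ, (typeCount N (x N) m : ℝ)) / M
            + (typeCount N (x N) ℓ : ℝ) * C) / N := by
      field_simp
    rw [huN]
    gcongr
  -- conclude via limsup
  clear_value S c y M C A T u
  have hev2 : ∀ᶠ N in Filter.atTop, u N < (A + T) / 2 :=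
    hu.eventually_lt_const (by linarith)
  have hev3 : ∀ᶠ N in Filter.atTop,
      (golombBits M (runLengths (supportList N (x N) ℓ)) : ℝ) / N ≤ (A + T) / 2 := by
    filter_upwards [hbound, hev2] with N hb he
    linarith
  have hcb : Filter.IsCoboundedUnder (· ≤ ·) Filter.atTop
      (fun N => (golombBits M (runLengths (supportList N (x N) ℓ)) : ℝ) / N) := by
    apply Filter.IsBoundedUnder.isCoboundedUnder_le
    exact Filter.isBoundedUnder_of
      ⟨0, fun N => div_nonneg (Nat.cast_nonneg _) (Nat.cast_nonneg _)⟩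
  calc Filter.limsup
        (fun N => (golombBits M (runLengths (supportList N (x N) ℓ)) : ℝ) / N)
        Filter.atTop
      ≤ (A + T) / 2 := Filter.limsup_le_of_le hcb hev3
    _ < T := by linarith
end

section
/- (Lossless decodability.) Let N ≥ 1, L ≥ 2, and let x, y ∈ {0, 1, ..., L−1}^N. Suppose that x and y have the same type vector, i.e. t_ℓ(x) = t_ℓ(y) for every 0 ≤ ℓ ≤ L−1, and that for every 1 ≤ ℓ ≤ L−1 the first t_ℓ(x) run lengths of the restricted support vector s_ℓ[I_ℓ(x)] of x coincide with the first t_ℓ(y) run lengths of the restricted support vector s_ℓ[I_ℓ(y)] of y. Then x = y. In other words, the map sending x to (t_0(x), ..., t_{L−1}(x)) together with the tuple of run-length sequences (r_1^ℓ, ..., r_{t_ℓ(x)}^ℓ) for ℓ = 1, ..., L−1 is injective on {0,...,L−1}^N. -/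
/-
The encoding is decoded level by level. A binary string is determined by its length together
with its run lengths, and `I_ℓ(x)` is obtained from `I_1 = {1,…,N}` by removing the positions of
the symbols `1,…,ℓ-1`. So if `I_ℓ(x) = I_ℓ(y)`, the run lengths at level `ℓ` force
`s_ℓ[I_ℓ(x)] = s_ℓ[I_ℓ(y)]`, i.e. `x` and `y` put the symbol `ℓ` at the same positions, whence
`I_{ℓ+1}(x) = I_{ℓ+1}(y)`. The positions left over after level `L-1` carry the symbol `0` in both.
-/

lemma List.modifyHead_injective {α : Type*} {f : α → α} (hf : Function.Injective f) :
    Function.Injective (List.modifyHead f)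
  | [], [], _ => rfl
  | a :: l, b :: m, h => by
    simp only [List.modifyHead_cons, List.cons.injEq, hf.eq_iff] at h
    rw [h.1, h.2]
  | [], _ :: _, h | _ :: _, [], h => by simp at h

lemma runLengths_true_cons (l : List Bool) : runLengths (true :: l) = 0 :: runLengths l := rfl

lemma runLengths_false_cons (l : List Bool) :
    runLengths (false :: l) = (runLengths l).modifyHead (· + 1) := by
  simp only [runLengths, Bool.false_eq_true, if_false]
  split <;> simp_all

lemma eq_of_runLengths_eq_of_length_eq :
    ∀ {a b : List Bool}, a.length = b.length → runLengths a = runLengths b → a = b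
  | [], [], _, _ => rfl
  | s :: a, t :: b, hlen, hrl => by
    have ih := @eq_of_runLengths_eq_of_length_eq a b (by simpa using hlen)
    cases s <;> cases t <;> simp only [runLengths_true_cons, runLengths_false_cons] at hrl
    · rw [ih (List.modifyHead_injective (add_left_injective 1) hrl)]
    · cases ha : runLengths a <;> simp [ha] at hrl
    · cases hb : runLengths b <;> simp [hb] at hrl
    · rw [ih (List.cons.inj hrl).2]

section Decoding

variable {N : ℕ} {x y : Fin N → ℕ}

lemma idxList_one : idxList N x 1 = List.finRange N := rfl

lemma idxList_succ {ℓ : ℕ} (hℓ : ℓ ≠ 0) :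
    idxList N x (ℓ + 1) = (idxList N x ℓ).filter (fun n => decide (x n ≠ ℓ)) := by
  simp [idxList, hℓ]

lemma mem_idxList_of_le {ℓ : ℕ} {n : Fin N} (h : ℓ ≤ x n) : n ∈ idxList N x ℓ := by
  induction ℓ with
  | zero => simp [idxList]
  | succ ℓ ih =>
    rcases eq_or_ne ℓ 0 with rfl | hℓ
    · simp [idxList_one]
    · rw [idxList_succ hℓ, List.mem_filter]
      exact ⟨ih (by omega), by simpa using (show x n ≠ ℓ by omega)⟩

lemma eq_iff_eq_of_idxList_eq {ℓ : ℕ} (hidx : idxList N x ℓ = idxList N y ℓ)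
    (hrl : runLengths (supportList N x ℓ) = runLengths (supportList N y ℓ)) (n : Fin N) :
    x n = ℓ ↔ y n = ℓ := by
  have hsupp : supportList N x ℓ = supportList N y ℓ :=
    eq_of_runLengths_eq_of_length_eq (by simp [supportList, hidx]) hrl
  rw [supportList, supportList, ← hidx, List.map_inj_left] at hsupp
  constructor
  · intro h
    exact decide_eq_decide.mp (hsupp n (mem_idxList_of_le h.ge)) |>.mp h
  · intro h
    exact decide_eq_decide.mp (hsupp n (hidx ▸ mem_idxList_of_le h.ge)) |>.mpr h

lemma idxList_eq_of_runLengths_eq {ℓ : ℕ} (hℓ : 1 ≤ ℓ)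
    (hrl : ∀ m, 1 ≤ m → m < ℓ →
      runLengths (supportList N x m) = runLengths (supportList N y m)) :
    idxList N x ℓ = idxList N y ℓ := by
  induction ℓ, hℓ using Nat.le_induction with
  | base => rfl
  | succ ℓ hℓ ih =>
    have hidx := ih fun m hm1 hm2 => hrl m hm1 (by omega)
    rw [idxList_succ (by omega), idxList_succ (by omega), hidx]
    refine List.filter_congr fun n _ => ?_
    simp [eq_iff_eq_of_idxList_eq hidx (hrl ℓ hℓ (by omega)) n]

lemma eq_iff_eq_of_runLengths_eq {ℓ : ℕ} (hℓ : 1 ≤ ℓ)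
    (hrl : ∀ m, 1 ≤ m → m ≤ ℓ →
      runLengths (supportList N x m) = runLengths (supportList N y m)) (n : Fin N) :
    x n = ℓ ↔ y n = ℓ :=
  eq_iff_eq_of_idxList_eq (idxList_eq_of_runLengths_eq hℓ fun m hm1 hm2 => hrl m hm1 hm2.le)
    (hrl ℓ hℓ le_rfl) n

end Decoding

theorem lossless_decodability_general (N L : ℕ)
    (x y : Fin N → ℕ) (hx : ∀ n, x n < L) (hy : ∀ n, y n < L)
    (hrl : ∀ ℓ, 1 ≤ ℓ → ℓ ≤ L - 1 →
      runLengths (supportList N x ℓ) = runLengths (supportList N y ℓ)) :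
    x = y := by
  have level {ℓ : ℕ} (hℓ : 1 ≤ ℓ) (hℓL : ℓ < L) (n : Fin N) : x n = ℓ ↔ y n = ℓ :=
    eq_iff_eq_of_runLengths_eq hℓ (fun m hm1 hm2 => hrl m hm1 (by omega)) n
  funext n
  by_cases hx0 : x n = 0
  · by_cases hy0 : y n = 0
    · rw [hx0, hy0]
    · exact (level (Nat.one_le_iff_ne_zero.mpr hy0) (hy n) n).mpr rfl
  · exact ((level (Nat.one_le_iff_ne_zero.mpr hx0) (hx n) n).mp rfl).symm

/-- **lossless decodability.**  If `x, y ∈ {0,…,L−1}^N` have the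
same type vector and, for every `1 ≤ ℓ ≤ L−1`, the run lengths of the
restricted support vector `s_ℓ[I_ℓ(x)]` coincide with those of `s_ℓ[I_ℓ(y)]`
(the trailing run of zeros being dropped), then `x = y`; i.e. the encoding map
is injective. -/
theorem lossless_decodability (N L : ℕ) (hN : 1 ≤ N) (hL : 2 ≤ L)
    (x y : Fin N → ℕ) (hx : ∀ n, x n < L) (hy : ∀ n, y n < L)
    (htype : ∀ ℓ < L, typeCount N x ℓ = typeCount N y ℓ)
    (hrl : ∀ ℓ, 1 ≤ ℓ → ℓ ≤ L - 1 →
      runLengths (supportList N x ℓ) = runLengths (supportList N y ℓ)) :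
    x = y :=
  lossless_decodability_general N L x y hx hy hrl
end
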